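/- Let X be a real Banach space such that the set of extreme points of the closed unit ball of X* is weak*-closed. Let Y ⊆ X be a closed U-subspace of X (every nonzero functional in Y* has a unique norm-preserving extension to X), and suppose the weak*-closure of the extreme points of the unit ball of Y* is contained in the unit sphere of Y*. Then the set of extreme points of the closed unit ball of Y* is weak*-compact. -/

import Mathlib

/-!
Restriction `X* → Y*` maps the unit ball `B_{X*}` onto `B_{Y*}` (Hahn–Banach), and when `Y` is a
`U`-subspace the only point of `B_{X*}` over a norm-one functional `f` is its norm-preserving
extension. So `f` is extreme in `B_{Y*}` exactly when that extension is extreme in `B_{X*}`, and the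
extreme points of `B_{Y*}`, all of norm one, are the norm-one restrictions of extreme points of
`B_{X*}`. These restrictions lie in the weak*-compact image `K` of the weak*-compact set
`ext B_{X*}`; as the weak*-closure of `ext B_{Y*}` stays in the unit sphere, it lies in
`K ∩ S_{Y*} = ext B_{Y*}`.
-/

open Metric Set

theorem LinearMap.mem_extremePoints_image_iff {𝕜 E F : Type*} [Ring 𝕜] [PartialOrder 𝕜]
    [AddCommGroup E] [Module 𝕜 E] [AddCommGroup F] [Module 𝕜 F] {T : E →ₗ[𝕜] F} {A : Set E} (hA : Convex 𝕜 A)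
    {x : E} (hx : x ∈ A) (hfiber : ∀ y ∈ A, T y = T x → y = x) :
    T x ∈ (T '' A).extremePoints 𝕜 ↔ x ∈ A.extremePoints 𝕜 := by
  refine ⟨fun hTx => ⟨hx, fun x₁ hx₁ x₂ hx₂ ⟨a, b, ha, hb, hab, hsum⟩ => ?_⟩,
    fun hx' => ⟨mem_image_of_mem T hx, ?_⟩⟩
  · refine hfiber x₁ hx₁ (hTx.2 (mem_image_of_mem T hx₁) (mem_image_of_mem T hx₂) ?_)
    exact ⟨a, b, ha, hb, hab, by rw [← hsum, map_add, map_smul, map_smul]⟩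
  · rintro _ ⟨x₁, hx₁, rfl⟩ _ ⟨x₂, hx₂, rfl⟩ ⟨a, b, ha, hb, hab, hsum⟩
    have hmid : a • x₁ + b • x₂ = x :=
      hfiber _ (hA hx₁ hx₂ ha.le hb.le hab) (by rw [map_add, map_smul, map_smul, hsum])
    rw [hx'.2 hx₁ hx₂ ⟨a, b, ha, hb, hab, hmid⟩]

theorem IsCompact.of_subset_of_closure_subset {α : Type*} [TopologicalSpace α] [T2Space α]
    {K S P : Set α} (hK : IsCompact K) (hSK : S ⊆ K) (hSP : closure S ⊆ P) (hKP : K ∩ P ⊆ S) :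
    IsCompact S := by
  have hclosed : IsClosed S :=
    closure_subset_iff_isClosed.mp fun _ hx => hKP ⟨closure_minimal hSK hK.isClosed hx, hSP hx⟩
  exact hK.of_isClosed_subset hclosed hSK

namespace Submodule

variable {X : Type*} [NormedAddCommGroup X] [NormedSpace ℝ X] (Y : Submodule ℝ X)

def IsUSubspace : Prop :=
  ∀ y' : StrongDual ℝ Y, y' ≠ 0 →
    ∃! x' : StrongDual ℝ X, (∀ y : Y, x' (y : X) = y' y) ∧ ‖x'‖ = ‖y'‖

def strongDualRestrict : StrongDual ℝ X →ₗ[ℝ] StrongDual ℝ Y where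
  toFun g := g.comp Y.subtypeL
  map_add' _ _ := rfl
  map_smul' _ _ := rfl

theorem norm_strongDualRestrict_le (g : StrongDual ℝ X) : ‖Y.strongDualRestrict g‖ ≤ ‖g‖ :=
  ContinuousLinearMap.opNorm_le_bound _ (norm_nonneg g) fun y => g.le_opNorm y

theorem image_strongDualRestrict_closedBall :
    Y.strongDualRestrict '' closedBall 0 1 = closedBall 0 1 := by
  refine Subset.antisymm ?_ fun f hf => ?_
  · rintro _ ⟨g, hg, rfl⟩
    rw [mem_closedBall_zero_iff (E := StrongDual ℝ X)] at hg
    rw [mem_closedBall_zero_iff (E := StrongDual ℝ Y)]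
    exact (Y.norm_strongDualRestrict_le g).trans hg
  · obtain ⟨g, hgf, hgn⟩ := exists_extension_norm_eq Y f
    refine ⟨g, ?_, ContinuousLinearMap.ext hgf⟩
    rwa [mem_closedBall_zero_iff (E := StrongDual ℝ X), hgn,
      ← mem_closedBall_zero_iff (E := StrongDual ℝ Y)]

theorem isCompact_toWeakDual_image_strongDualRestrict {A : Set (StrongDual ℝ X)}
    (hA : IsCompact (StrongDual.toWeakDual '' A)) :
    IsCompact (StrongDual.toWeakDual '' (Y.strongDualRestrict '' A)) := by
  have hcont : Continuous fun g : WeakDual ℝ X =>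
      StrongDual.toWeakDual (Y.strongDualRestrict (WeakDual.toStrongDual g)) :=
    WeakDual.continuous_of_continuous_eval fun y => WeakDual.eval_continuous (y : X)
  have hK := hA.image hcont
  rw [image_image] at hK
  rwa [image_image]

variable {Y}

theorem IsUSubspace.eq_of_strongDualRestrict_eq (hU : Y.IsUSubspace) {g h : StrongDual ℝ X}
    (hne : Y.strongDualRestrict g ≠ 0) (hg : ‖g‖ ≤ ‖Y.strongDualRestrict g‖)
    (hh : ‖h‖ ≤ ‖Y.strongDualRestrict g‖)
    (heq : Y.strongDualRestrict h = Y.strongDualRestrict g) : h = g := by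
  obtain ⟨_, -, huniq⟩ := hU _ hne
  have hg' := le_antisymm hg (Y.norm_strongDualRestrict_le g)
  have hh' := le_antisymm hh (heq ▸ Y.norm_strongDualRestrict_le h)
  rw [huniq h ⟨fun y => DFunLike.congr_fun heq y, hh'⟩, huniq g ⟨fun _ => rfl, hg'⟩]

theorem IsUSubspace.strongDualRestrict_mem_extremePoints_iff (hU : Y.IsUSubspace)
    {g : StrongDual ℝ X} (hg : ‖g‖ ≤ 1) (hgY : ‖Y.strongDualRestrict g‖ = 1) :
    Y.strongDualRestrict g ∈ (closedBall 0 1).extremePoints ℝ ↔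
      g ∈ (closedBall 0 1).extremePoints ℝ := by
  rw [← Y.image_strongDualRestrict_closedBall]
  refine LinearMap.mem_extremePoints_image_iff (convex_closedBall 0 1)
    (mem_closedBall_zero_iff (E := StrongDual ℝ X) |>.mpr hg) fun h hhB heq => ?_
  have hne : Y.strongDualRestrict g ≠ 0 := by
    intro h0
    rw [h0, ContinuousLinearMap.opNorm_zero] at hgY
    exact zero_ne_one hgY
  have hh : ‖h‖ ≤ 1 := mem_closedBall_zero_iff (E := StrongDual ℝ X) |>.mp hhB
  exact hU.eq_of_strongDualRestrict_eq hne (hgY ▸ hg) (hgY ▸ hh) heq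

theorem IsUSubspace.extremePoints_inter_sphere (hU : Y.IsUSubspace) :
    (closedBall (0 : StrongDual ℝ Y) 1).extremePoints ℝ ∩ sphere 0 1 =
      Y.strongDualRestrict '' (closedBall 0 1).extremePoints ℝ ∩ sphere 0 1 := by
  ext f
  simp only [mem_inter_iff, mem_sphere_zero_iff_norm (E := StrongDual ℝ Y)]
  refine ⟨fun ⟨hf, hfn⟩ => ⟨?_, hfn⟩, fun ⟨⟨g, hg, hgf⟩, hfn⟩ => ⟨?_, hfn⟩⟩
  · have hne : f ≠ 0 := by
      rintro rfl
      exact zero_ne_one (ContinuousLinearMap.opNorm_zero.symm.trans hfn)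
    obtain ⟨g, ⟨hext, hgn⟩, -⟩ := hU f hne
    have hgf : Y.strongDualRestrict g = f := ContinuousLinearMap.ext hext
    refine ⟨g, ?_, hgf⟩
    rw [← hU.strongDualRestrict_mem_extremePoints_iff (hgn.trans hfn).le (hgf ▸ hfn), hgf]
    exact hf
  · subst hgf
    exact (hU.strongDualRestrict_mem_extremePoints_iff
      (mem_closedBall_zero_iff (E := StrongDual ℝ X) |>.mp (extremePoints_subset hg)) hfn).mpr hg

end Submodule

theorem stmt_17 (X : Type*) [NormedAddCommGroup X] [NormedSpace ℝ X]
    (hXext : IsClosed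
      (StrongDual.toWeakDual '' Set.extremePoints ℝ (Metric.closedBall (0 : StrongDual ℝ X) 1) :
        Set (WeakDual ℝ X)))
    (Y : Submodule ℝ X)
    (hU : ∀ y' : StrongDual ℝ Y, y' ≠ 0 →
      ∃! x' : StrongDual ℝ X, (∀ y : Y, x' (y : X) = y' y) ∧ ‖x'‖ = ‖y'‖)
    (hsphere : closure
        (StrongDual.toWeakDual '' Set.extremePoints ℝ (Metric.closedBall (0 : StrongDual ℝ Y) 1) :
          Set (WeakDual ℝ Y)) ⊆
      {f : WeakDual ℝ Y | ‖StrongDual.toWeakDual.symm f‖ = 1}) :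
    IsCompact
      (StrongDual.toWeakDual '' Set.extremePoints ℝ (Metric.closedBall (0 : StrongDual ℝ Y) 1) :
        Set (WeakDual ℝ Y)) := by
  have hextY : (closedBall (0 : StrongDual ℝ Y) 1).extremePoints ℝ =
      Y.strongDualRestrict '' (closedBall 0 1).extremePoints ℝ ∩ sphere 0 1 := by
    have hnorm : (closedBall (0 : StrongDual ℝ Y) 1).extremePoints ℝ ⊆ sphere 0 1 := fun f hf =>
      mem_sphere_zero_iff_norm (E := StrongDual ℝ Y) |>.mpr
        (hsphere (subset_closure (mem_image_of_mem _ hf)))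
    rw [← Submodule.IsUSubspace.extremePoints_inter_sphere hU, inter_eq_left.mpr hnorm]
  have hcompactX : IsCompact (StrongDual.toWeakDual ''
      (closedBall (0 : StrongDual ℝ X) 1).extremePoints ℝ) := by
    refine (WeakDual.isCompact_closedBall 0 1).of_isClosed_subset hXext ?_
    rintro _ ⟨g, hg, rfl⟩
    exact extremePoints_subset hg
  refine (Y.isCompact_toWeakDual_image_strongDualRestrict hcompactX).of_subset_of_closure_subset
    ?_ hsphere ?_
  · rw [hextY]
    exact image_mono inter_subset_left
  · rintro _ ⟨⟨f, hf, rfl⟩, hfn⟩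
    rw [hextY]
    exact ⟨f, ⟨hf, mem_sphere_zero_iff_norm (E := StrongDual ℝ Y) |>.mpr hfn⟩, rfl⟩
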